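/- Let d ≥ 11 and let 𝐯 be a recurrent aperiodic balanced sequence over d letters that is a Pansiot sequence. Call a letter of 𝐯 frequent if no two of its consecutive occurrences are at distance d+1, and rare if no two of its consecutive occurrences are at distance d−1. Then either every pair of consecutive occurrences of every frequent letter of 𝐯 is at distance exactly d−1, or every pair of consecutive occurrences of every rare letter of 𝐯 is at distance exactly d+1. -/

import Mathlib

open Filter
open scoped ENNReal

namespace BalancedCE

variable {α : Type*} {β : Type*}

/-- The factor of `v` of length `n` starting at position `i`. -/
def factorAt (v : ℕ → α) (i n : ℕ) : List α := (List.range n).map fun k => v (i + k)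

/-- `u` is a factor of the sequence `v`. -/
def IsFactor (v : ℕ → α) (u : List α) : Prop := ∃ i, factorAt v i u.length = u

/-- The word `w` occurs in the sequence `v` at position `i`. -/
def OccursAt (v : ℕ → α) (w : List α) (i : ℕ) : Prop := factorAt v i w.length = w

/-- A sequence is balanced if counts of each letter in equal-length factors differ by at most 1. -/
def Balanced [DecidableEq α] (v : ℕ → α) : Prop :=
  ∀ (a : α) (u w : List α), IsFactor v u → IsFactor v w → u.length = w.length →
    |(u.count a : ℤ) - (w.count a : ℤ)| ≤ 1

def EventuallyPeriodic (v : ℕ → α) : Prop :=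
  ∃ p, 0 < p ∧ ∃ N, ∀ n, N ≤ n → v (n + p) = v n

def Recurrent (v : ℕ → α) : Prop :=
  ∀ u : List α, IsFactor v u → ∀ N : ℕ, ∃ i, N ≤ i ∧ OccursAt v u i

/-- `i < j` are consecutive occurrences of the letter `a` in `v`. -/
def ConsecOcc (v : ℕ → α) (a : α) (i j : ℕ) : Prop :=
  i < j ∧ v i = a ∧ v j = a ∧ ∀ k, i < k → k < j → v k ≠ a

/-- `p` is a period of the finite word `z` (i.e. `z` is a prefix of `u^ω` with `|u| = p`). -/
def IsPeriod (z : List α) (p : ℕ) : Prop :=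
  0 < p ∧ ∀ i, i + p < z.length → z[i]? = z[i + p]?

/-- The minimal period of a finite word. -/
noncomputable def minPeriod (z : List α) : ℕ := sInf {p | IsPeriod z p}

/-- The exponent of a finite word: its length divided by its minimal period. -/
noncomputable def expE (z : List α) : ℝ≥0∞ := (z.length : ℝ≥0∞) / (minPeriod z : ℝ≥0∞)

/-- The critical exponent of a sequence: the supremum of exponents of nonempty factors. -/
noncomputable def criticalExponent (v : ℕ → α) : ℝ≥0∞ :=
  ⨆ (z : List α) (_ : IsFactor v z ∧ z ≠ []), expE z

/-- A Pansiot sequence over a `d`-letter alphabet. -/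
def Pansiot (d : ℕ) (v : ℕ → α) : Prop :=
  (∀ i : ℕ, (factorAt v i (d - 1)).Nodup) ∧
  ∀ (a : α) (i j : ℕ), ConsecOcc v a i j → v (i + 1) ≠ v (j + 1)

/-- The letter `a` has frequency `ρ` in the sequence `v`. -/
def HasFreq [DecidableEq α] (v : ℕ → α) (a : α) (ρ : ℝ) : Prop :=
  Tendsto (fun n => ((factorAt v 0 n).count a : ℝ) / n) atTop (nhds ρ)

/-- Factor complexity of a sequence. -/
noncomputable def complexity (v : ℕ → α) (n : ℕ) : ℕ :=
  Set.ncard {u : List α | IsFactor v u ∧ u.length = n}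

/-- Sturmian sequences: aperiodic binary sequences of factor complexity `n + 1`.
Convention: the letter `a` is `false`, the letter `b` is `true`. -/
def Sturmian (u : ℕ → Bool) : Prop :=
  ¬ EventuallyPeriodic u ∧ ∀ n, complexity u n = n + 1

/-- Prepending a letter to a sequence. -/
def consSeq (c : α) (v : ℕ → α) : ℕ → α := fun n =>
  match n with
  | 0 => c
  | Nat.succ m => v m

/-- A standard sequence: a Sturmian sequence `u` such that `a·u` and `b·u` are Sturmian. -/
def IsStandard (u : ℕ → Bool) : Prop :=
  Sturmian u ∧ Sturmian (consSeq false u) ∧ Sturmian (consSeq true u)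

/-- The slope of a binary sequence, with the convention `ρ_b > ρ_a` (`a = false`, `b = true`). -/
def HasSlope (u : ℕ → Bool) (θ : ℝ) : Prop :=
  ∃ ρa ρb : ℝ, HasFreq u false ρa ∧ HasFreq u true ρb ∧ ρa < ρb ∧ θ = ρa / ρb

/-- `θ` has the (infinite) continued fraction expansion `[0; a 1, a 2, a 3, …]`:
there are complete quotients' fractional parts `t n ∈ (0,1)` with `t 0 = θ` and
`1 / t n = a (n+1) + t (n+1)` for all `n`. (The value `a 0` is irrelevant.) -/
def HasCF (θ : ℝ) (a : ℕ → ℕ) : Prop :=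
  ∃ t : ℕ → ℝ, t 0 = θ ∧ ∀ n, 0 < t n ∧ t n < 1 ∧ 1 / t n = (a (n + 1) : ℝ) + t (n + 1)

/-- Number of positions `< n` where `u` takes the value `c`. -/
def countBefore (u : ℕ → Bool) (c : Bool) (n : ℕ) : ℕ :=
  ((List.range n).filter fun i => u i = c).length

/-- The colouring of a binary sequence `u` by `y` (on the `a = false` positions)
and `y'` (on the `b = true` positions). -/
def colour (u : ℕ → Bool) (y : ℕ → α) (y' : ℕ → β) : ℕ → α ⊕ β := fun n =>
  if u n = false then Sum.inl (y (countBefore u false n))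
  else Sum.inr (y' (countBefore u true n))

/-- A constant gap sequence: periodic, and consecutive occurrences of each occurring
letter are at a constant distance. -/
def ConstantGap (y : ℕ → α) : Prop :=
  (∃ p, 0 < p ∧ ∀ n, y (n + p) = y n) ∧
  ∀ c : α, (∃ i, y i = c) → ∃ g, 0 < g ∧ ∀ i j, ConsecOcc y c i j → j - i = g

/-- The discolouration (projection) map: letters of the first alphabet go to `a = false`,
letters of the second alphabet go to `b = true`. -/
def proj : α ⊕ β → Bool := Sum.elim (fun _ => false) (fun _ => true)

/-- `v` is a return word to `w` in the sequence `z`. -/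
def IsReturnWord (z : ℕ → α) (w v : List α) : Prop :=
  ∃ i j : ℕ, i < j ∧ OccursAt z w i ∧ OccursAt z w j ∧
    (∀ k, i < k → k < j → ¬ OccursAt z w k) ∧ v = factorAt z i (j - i)

def RightSpecial (z : ℕ → α) (w : List α) : Prop :=
  ∃ a b : α, a ≠ b ∧ IsFactor z (w ++ [a]) ∧ IsFactor z (w ++ [b])

def LeftSpecial (z : ℕ → α) (w : List α) : Prop :=
  ∃ a b : α, a ≠ b ∧ IsFactor z (a :: w) ∧ IsFactor z (b :: w)

def Bispecial (z : ℕ → α) (w : List α) : Prop := LeftSpecial z w ∧ RightSpecial z w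

/-- `o` enumerates, in increasing order, all occurrences of `w` in `z`. -/
def IsOccEnum (z : ℕ → α) (w : List α) (o : ℕ → ℕ) : Prop :=
  StrictMono o ∧ (∀ n, OccursAt z w (o n)) ∧ ∀ i, OccursAt z w i → ∃ n, o n = i

/-- The derived sequence of `z` with respect to the occurrence enumeration `o` of a factor:
its `n`-th letter is the return word between the `n`-th and `(n+1)`-st occurrences. -/
def derivedSeq (z : ℕ → α) (o : ℕ → ℕ) : ℕ → List α :=
  fun n => factorAt z (o n) (o (n + 1) - o n)

/-- The slope of a sequence over a two-letter alphabet: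
the ratio of the smaller letter frequency to the larger one. -/
def HasSlope2 {γ : Type*} [DecidableEq γ] (z : ℕ → γ) (θ : ℝ) : Prop :=
  ∃ (c c' : γ) (ρ ρ' : ℝ), c ≠ c' ∧ (∀ n, z n = c ∨ z n = c') ∧
    HasFreq z c ρ ∧ HasFreq z c' ρ' ∧ ρ < ρ' ∧ θ = ρ / ρ'

/-- The purely cyclic constant gap sequence `(0 1 ⋯ (δ-1))^ω` over `ZMod δ`. -/
def cyc (δ : ℕ) : ℕ → ZMod δ := fun n => (n : ZMod δ)

/-- The colouring `colour(u, (1 2 ⋯ δ)^ω, (1' 2' ⋯ δ')^ω)` over `2δ` letters. -/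
def colourCyc (δ : ℕ) (u : ℕ → Bool) : ℕ → ZMod δ ⊕ ZMod δ := colour u (cyc δ) (cyc δ)

/-!
Write `nxt s` for the next occurrence of the letter `v s` after position `s`. The Pansiot
conditions force every gap `nxt s - s` to be `d - 1`, `d` or `d + 1`, and force rigid rules on the
gaps of neighbouring positions: a gap `d` is followed by a gap `d + 1`, a gap `d + 1` by a gap
`d - 1`, and a gap `d - 1` is not followed by another one. Balance makes a letter with a gap
`d - 1` frequent and a letter with a gap `d + 1` rare.

Suppose a frequent and a rare letter both have a gap `d`. The rules then propagate the gaps `d` of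
rare letters along an arithmetic progression of step `d - 1`, and make the gaps `d` of frequent
letters recur after `d` or `d + 1` positions, always at distance at least two from that
progression. Modulo `d - 1` each such step raises the residue of the position by one or two while
keeping it away from `-1`, `0` and `1`, which cannot go on forever.
-/

theorem length_factorAt (v : ℕ → α) (i n : ℕ) : (factorAt v i n).length = n := by
  simp [factorAt]

theorem mem_factorAt {v : ℕ → α} {i n : ℕ} {x : α} :
    x ∈ factorAt v i n ↔ ∃ k < n, v (i + k) = x := by
  simp [factorAt]

theorem factorAt_add (v : ℕ → α) (i m n : ℕ) :
    factorAt v i (m + n) = factorAt v i m ++ factorAt v (i + m) n := by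
  simp [factorAt, List.range_add, Nat.add_assoc]

theorem factorAt_one (v : ℕ → α) (i : ℕ) : factorAt v i 1 = [v i] := by
  simp [factorAt]

theorem apply_add_eq_of_factorAt_eq {v : ℕ → α} {i i' n k : ℕ}
    (h : factorAt v i n = factorAt v i' n) (hk : k < n) : v (i + k) = v (i' + k) := by
  simpa [factorAt, hk] using congrArg (·[k]?) h

theorem Recurrent.exists_lt_apply_eq {v : ℕ → α} (hrec : Recurrent v) (s : ℕ) :
    ∃ o, s < o ∧ v o = v s := by
  obtain ⟨o, hso, ho⟩ := hrec (factorAt v s 1) ⟨s, by rw [length_factorAt]⟩ (s + 1)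
  refine ⟨o, hso, ?_⟩
  simpa [OccursAt, length_factorAt, factorAt_one] using ho

theorem Recurrent.exists_consecOcc_ge {v : ℕ → α} (hrec : Recurrent v) {a : α} {i j : ℕ}
    (h : ConsecOcc v a i j) (N : ℕ) : ∃ i', N ≤ i' ∧ ConsecOcc v a i' (i' + (j - i)) := by
  obtain ⟨i', hNi', hocc⟩ :=
    hrec (factorAt v i (j - i + 1)) ⟨i, by rw [length_factorAt]⟩ N
  rw [OccursAt, length_factorAt] at hocc
  have hshift : ∀ k ≤ j - i, v (i' + k) = v (i + k) := fun k hk =>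
    apply_add_eq_of_factorAt_eq hocc (Nat.lt_succ_of_le hk)
  obtain ⟨hij, hi, hj, hbetween⟩ := h
  refine ⟨i', hNi', by omega, by simpa [hi] using hshift 0 (Nat.zero_le _), ?_, ?_⟩
  · rw [hshift _ le_rfl, Nat.add_sub_cancel' hij.le, hj]
  · intro k hk hk'
    rw [← Nat.add_sub_cancel' hk.le, hshift _ (by omega)]
    exact hbetween _ (by omega) (by omega)

theorem Balanced.sub_le_sub_add_one [DecidableEq α] {v : ℕ → α} (hbal : Balanced v) {a : α}
    {i j i' j' : ℕ} (h : ConsecOcc v a i j) (h' : ConsecOcc v a i' j') :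
    j' - i' ≤ j - i + 1 := by
  obtain ⟨hij, hi, hj, -⟩ := h
  by_contra! hlt
  -- the factor `v i ⋯ v j` contains `a` twice, the factor of the same length after `i'` never
  have hbalanced := hbal a (factorAt v i (j - i + 1)) (factorAt v (i' + 1) (j - i + 1))
    ⟨i, by rw [length_factorAt]⟩ ⟨i' + 1, by rw [length_factorAt]⟩
    (by rw [length_factorAt, length_factorAt])
  rw [abs_le] at hbalanced
  have htwo : 2 ≤ (factorAt v i (j - i + 1)).count a := by
    rw [show j - i + 1 = 1 + (j - i - 1) + 1 by omega, factorAt_add, factorAt_add, factorAt_one,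
      factorAt_one, show i + (1 + (j - i - 1)) = j by omega]
    simp [List.count_append, hi, hj]
  have hzero : (factorAt v (i' + 1) (j - i + 1)).count a = 0 := by
    refine List.count_eq_zero.2 fun hmem => ?_
    obtain ⟨k, hk, hvk⟩ := mem_factorAt.1 hmem
    exact h'.2.2.2 (i' + 1 + k) (by omega) (by omega) hvk
  omega

def IsFrequent (v : ℕ → α) (d : ℕ) (a : α) : Prop :=
  ∀ i j, ConsecOcc v a i j → j - i ≠ d + 1

def IsRare (v : ℕ → α) (d : ℕ) (a : α) : Prop :=
  ∀ i j, ConsecOcc v a i j → j - i ≠ d - 1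

section Pansiot

variable {d : ℕ} {v : ℕ → α}

theorem Pansiot.eq_of_apply_add_eq (hpan : Pansiot d v) {i k l : ℕ} (hk : k < d - 1)
    (hl : l < d - 1) (h : v (i + k) = v (i + l)) : k = l := by
  have hnodup := hpan.1 i
  rw [factorAt, List.nodup_map_iff_inj_on List.nodup_range] at hnodup
  exact hnodup k (List.mem_range.2 hk) l (List.mem_range.2 hl) h

theorem Pansiot.apply_add_ne (hpan : Pansiot d v) {s t : ℕ} (h0 : 0 < t) (ht : t < d - 1) :
    v (s + t) ≠ v s := fun h =>
  h0.ne' (hpan.eq_of_apply_add_eq ht (by omega) (by simpa using h))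

theorem Pansiot.nodup_factorAt (hpan : Pansiot d v) {k : ℕ} (h : v (k + (d - 1)) ≠ v k) :
    (factorAt v k d).Nodup := by
  have hd : 2 ≤ d := by
    by_contra! hd
    exact h (by rw [show d - 1 = 0 by omega, Nat.add_zero])
  rw [show d = d - 1 + 1 by omega, factorAt_add, factorAt_one, List.nodup_append]
  refine ⟨hpan.1 k, List.nodup_singleton _, fun x hx y hy hxy => ?_⟩
  obtain ⟨t, ht, rfl⟩ := mem_factorAt.1 hx
  rw [List.mem_singleton.1 hy] at hxy
  rcases Nat.eq_zero_or_pos t with rfl | htpos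
  · exact h (by simpa using hxy.symm)
  · have := hpan.eq_of_apply_add_eq (i := k + 1) (k := t - 1) (l := d - 2) (by omega) (by omega)
      (by rwa [show k + 1 + (t - 1) = k + t by omega, show k + 1 + (d - 2) = k + (d - 1) by omega])
    omega

theorem Pansiot.apply_add_pred_eq [Fintype α] (hpan : Pansiot d v) (hcard : Fintype.card α ≤ d)
    {k : ℕ} {c : α} (hc : ∀ t < d, v (k + t) ≠ c) : v (k + (d - 1)) = v k := by
  classical
  by_contra h
  -- the window `v k ⋯ v (k + (d - 1))` then consists of `d` distinct letters, so it contains `c`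
  have hnodup := hpan.nodup_factorAt h
  have huniv : (factorAt v k d).toFinset = Finset.univ :=
    Finset.eq_univ_of_card _ (le_antisymm (Finset.card_le_univ _)
      (by rwa [List.toFinset_card_of_nodup hnodup, length_factorAt]))
  obtain ⟨t, ht, hvt⟩ := mem_factorAt.1 (List.mem_toFinset.1 (huniv ▸ Finset.mem_univ c))
  exact hc t ht hvt

end Pansiot

section NextOccurrence

variable {v : ℕ → α} (hv : ∀ s, ∃ o, s < o ∧ v o = v s)

section Basic

open Classical

noncomputable def nxt (s : ℕ) : ℕ := Nat.find (hv s)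

theorem lt_nxt (s : ℕ) : s < nxt hv s := (Nat.find_spec (hv s)).1

theorem apply_nxt (s : ℕ) : v (nxt hv s) = v s := (Nat.find_spec (hv s)).2

theorem apply_ne_of_lt_nxt {s k : ℕ} (h1 : s < k) (h2 : k < nxt hv s) : v k ≠ v s := fun h =>
  Nat.find_min (hv s) h2 ⟨h1, h⟩

theorem nxt_le_of_apply_eq {s k : ℕ} (h1 : s < k) (h2 : v k = v s) : nxt hv s ≤ k :=
  Nat.find_le ⟨h1, h2⟩

end Basic

theorem apply_add_of_nxt_eq {s g : ℕ} (h : nxt hv s = s + g) : v (s + g) = v s :=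
  h ▸ apply_nxt hv s

theorem consecOcc_nxt (s : ℕ) : ConsecOcc v (v s) s (nxt hv s) :=
  ⟨lt_nxt hv s, rfl, apply_nxt hv s, fun _ h1 h2 => apply_ne_of_lt_nxt hv h1 h2⟩

theorem nxt_eq_of_consecOcc {a : α} {i j : ℕ} (h : ConsecOcc v a i j) : nxt hv i = j := by
  obtain ⟨hij, rfl, hj, hbetween⟩ := h
  refine le_antisymm (nxt_le_of_apply_eq hv hij hj) (not_lt.1 fun hlt => ?_)
  exact hbetween _ (lt_nxt hv i) hlt (apply_nxt hv i)

variable {d : ℕ}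

theorem add_pred_le_nxt (hpan : Pansiot d v) (s : ℕ) : s + (d - 1) ≤ nxt hv s := by
  by_contra! hlt
  have := lt_nxt hv s
  exact hpan.apply_add_ne (s := s) (t := nxt hv s - s) (by omega) (by omega)
    (by rw [Nat.add_sub_cancel' this.le, apply_nxt hv s])

theorem nxt_eq_add_pred (hpan : Pansiot d v) (hd : 2 ≤ d) {s : ℕ} (h : v (s + (d - 1)) = v s) :
    nxt hv s = s + (d - 1) :=
  le_antisymm (nxt_le_of_apply_eq hv (by omega) h) (add_pred_le_nxt hv hpan s)

theorem apply_add_pred_eq_of_lt_nxt [Fintype α] (hpan : Pansiot d v)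
    (hcard : Fintype.card α ≤ d) {s i : ℕ} (hi : s < i) (hi' : i + (d - 1) < nxt hv s) :
    v (i + (d - 1)) = v i :=
  hpan.apply_add_pred_eq hcard fun t ht =>
    apply_ne_of_lt_nxt hv (s := s) (k := i + t) (by omega) (by omega)

theorem nxt_succ_ne_nxt_add_one (hpan : Pansiot d v) (s : ℕ) : nxt hv (s + 1) ≠ nxt hv s + 1 :=
  fun h => hpan.2 _ _ _ (consecOcc_nxt hv s) (by rw [← h, apply_nxt hv (s + 1)])

theorem nxt_succ_ne_nxt (hpan : Pansiot d v) (hd : 3 ≤ d) (s : ℕ) :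
    nxt hv (s + 1) ≠ nxt hv s :=
  fun h => hpan.apply_add_ne (s := s) (t := 1) one_pos (by omega)
    (by rw [← apply_nxt hv (s + 1), h, apply_nxt hv s])

theorem nxt_le_add_add_one [Fintype α] (hpan : Pansiot d v) (hcard : Fintype.card α ≤ d)
    (hd : 2 ≤ d) (s : ℕ) : nxt hv s ≤ s + d + 1 := by
  by_contra! hlt
  have h1 := apply_add_pred_eq_of_lt_nxt hv hpan hcard (s := s) (i := s + 1) (by omega) (by omega)
  have h2 := apply_add_pred_eq_of_lt_nxt hv hpan hcard (s := s) (i := s + 2) (by omega) (by omega)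
  have hnxt := nxt_eq_add_pred hv hpan hd h1
  exact hpan.2 _ _ _ (consecOcc_nxt hv (s + 1))
    (by rw [hnxt, show s + 1 + (d - 1) + 1 = s + 2 + (d - 1) by omega, h2])

section GapRules

variable [Fintype α]

theorem nxt_succ_eq_of_nxt_eq_add_add_one (hpan : Pansiot d v) (hcard : Fintype.card α ≤ d)
    (hd : 2 ≤ d) {s : ℕ} (h : nxt hv s = s + d + 1) :
    nxt hv (s + 1) = s + 1 + (d - 1) :=
  nxt_eq_add_pred hv hpan (by omega)
    (apply_add_pred_eq_of_lt_nxt hv hpan hcard (lt_add_one s) (by omega))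

theorem nxt_succ_eq_of_nxt_eq_add (hpan : Pansiot d v) (hcard : Fintype.card α ≤ d)
    (hd : 3 ≤ d) {s : ℕ} (h : nxt hv s = s + d) :
    nxt hv (s + 1) = s + 1 + d + 1 := by
  have := add_pred_le_nxt hv hpan (s + 1)
  have := nxt_le_add_add_one hv hpan hcard (by omega) (s + 1)
  have := nxt_succ_ne_nxt hv hpan hd s
  have := nxt_succ_ne_nxt_add_one hv hpan s
  omega

theorem nxt_eq_add_pred_of_nxt_succ_eq_add (hpan : Pansiot d v)
    (hcard : Fintype.card α ≤ d) (hd : 2 ≤ d) {s : ℕ} (h : nxt hv (s + 1) = s + 1 + d) :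
    nxt hv s = s + (d - 1) := by
  have := add_pred_le_nxt hv hpan s
  have := nxt_le_add_add_one hv hpan hcard (by omega) s
  have := nxt_succ_ne_nxt_add_one hv hpan s
  have := nxt_succ_eq_of_nxt_eq_add_add_one hv hpan hcard hd (s := s)
  omega

end GapRules

theorem IsFrequent.nxt_ne {s : ℕ} (h : IsFrequent v d (v s)) : nxt hv s ≠ s + d + 1 :=
  fun heq => h _ _ (consecOcc_nxt hv s) (by omega)

theorem IsRare.nxt_ne {s : ℕ} (h : IsRare v d (v s)) : nxt hv s ≠ s + (d - 1) :=
  fun heq => h _ _ (consecOcc_nxt hv s) (by omega)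

theorem Balanced.isFrequent_of_nxt_eq [DecidableEq α] (hbal : Balanced v) {s : ℕ}
    (h : nxt hv s = s + (d - 1)) : IsFrequent v d (v s) := fun i j hij heq => by
  have := hbal.sub_le_sub_add_one (consecOcc_nxt hv s) hij
  have := lt_nxt hv s
  omega

theorem Balanced.isRare_of_nxt_eq [DecidableEq α] (hbal : Balanced v) {s : ℕ}
    (h : nxt hv s = s + d + 1) : IsRare v d (v s) := fun i j hij heq => by
  have := hbal.sub_le_sub_add_one hij (consecOcc_nxt hv s)
  have := hij.1
  omega

def FrequentMidGap (d s : ℕ) : Prop := nxt hv s = s + d ∧ IsFrequent v d (v s)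

def RareMidGap (d s : ℕ) : Prop := nxt hv s = s + d ∧ IsRare v d (v s)

theorem nxt_eq_add_of_consecOcc [Fintype α] (hpan : Pansiot d v) (hcard : Fintype.card α ≤ d)
    (hd : 2 ≤ d) {a : α} {i j : ℕ} (h : ConsecOcc v a i j) (h₁ : j - i ≠ d - 1)
    (h₂ : j - i ≠ d + 1) : nxt hv i = i + d := by
  have := nxt_eq_of_consecOcc hv h
  have := add_pred_le_nxt hv hpan i
  have := nxt_le_add_add_one hv hpan hcard hd i
  omega

section MidGaps

variable [Fintype α] [DecidableEq α]

theorem nxt_add_ne_of_nxt_eq_add (hpan : Pansiot d v) (hcard : Fintype.card α ≤ d) (hd : 3 ≤ d)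
    (hbal : Balanced v) {s : ℕ} (h : nxt hv s = s + d) : nxt hv (s + d) ≠ s + d + d := by
  intro h'
  -- the letter `v (s + 1)` would have a gap `d + 1` at `s + 1` and a gap `d - 1` at `s + d + 2`
  have h₁ := nxt_succ_eq_of_nxt_eq_add hv hpan hcard hd h
  have h₂ := nxt_succ_eq_of_nxt_eq_add_add_one hv hpan hcard (by omega)
    (nxt_succ_eq_of_nxt_eq_add hv hpan hcard hd h')
  have hletter : v (s + d + 1 + 1) = v (s + 1) := by
    rw [show s + d + 1 + 1 = s + 1 + (d + 1) by omega,
      apply_add_of_nxt_eq hv (g := d + 1) (by omega)]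
  have hrare := hbal.isRare_of_nxt_eq hv h₁
  rw [← hletter] at hrare
  exact hrare.nxt_ne hv h₂

theorem FrequentMidGap.not_isRare (hpan : Pansiot d v) (hcard : Fintype.card α ≤ d)
    (hd : 3 ≤ d) (hbal : Balanced v) {s : ℕ} (h : FrequentMidGap hv d s) :
    ¬ IsRare v d (v s) := by
  intro hrare
  obtain ⟨hs, hfreq⟩ := h
  rw [← apply_add_of_nxt_eq hv hs] at hfreq hrare
  have := add_pred_le_nxt hv hpan (s + d)
  have := nxt_le_add_add_one hv hpan hcard (by omega) (s + d)
  have := hfreq.nxt_ne hv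
  have := hrare.nxt_ne hv
  exact nxt_add_ne_of_nxt_eq_add hv hpan hcard hd hbal hs (by omega)

theorem FrequentMidGap.next (hpan : Pansiot d v) (hcard : Fintype.card α ≤ d) (hd : 3 ≤ d)
    (hbal : Balanced v) {s : ℕ} (h : FrequentMidGap hv d s) :
    FrequentMidGap hv d (s + d) ∨ FrequentMidGap hv d (s + d + 1) := by
  obtain ⟨hs, hfreq⟩ := h
  rw [← apply_add_of_nxt_eq hv hs] at hfreq
  have := add_pred_le_nxt hv hpan (s + d)
  have := nxt_le_add_add_one hv hpan hcard (by omega) (s + d)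
  have := hfreq.nxt_ne hv
  by_cases hmid : nxt hv (s + d) = s + d + d
  · exact Or.inl ⟨hmid, hfreq⟩
  -- the gap at `s + d` is `d - 1`, and the frequent letter `v (s + 2)` takes over at `s + d + 1`
  have h₂ := nxt_succ_eq_of_nxt_eq_add_add_one hv hpan hcard (by omega)
    (nxt_succ_eq_of_nxt_eq_add hv hpan hcard hd hs)
  have hfreq₂ := hbal.isFrequent_of_nxt_eq hv h₂
  rw [← apply_add_of_nxt_eq hv h₂, show s + 1 + 1 + (d - 1) = s + d + 1 by omega] at hfreq₂
  refine Or.inr ⟨?_, hfreq₂⟩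
  have := add_pred_le_nxt hv hpan (s + d + 1)
  have := nxt_le_add_add_one hv hpan hcard (by omega) (s + d + 1)
  have := hfreq₂.nxt_ne hv
  have := nxt_succ_ne_nxt_add_one hv hpan (s + d)
  omega

theorem FrequentMidGap.exists_ge (hpan : Pansiot d v) (hcard : Fintype.card α ≤ d) (hd : 3 ≤ d)
    (hbal : Balanced v) {s : ℕ} (h : FrequentMidGap hv d s) (N : ℕ) :
    ∃ s' ≥ N, FrequentMidGap hv d s' := by
  induction N with
  | zero => exact ⟨s, Nat.zero_le _, h⟩
  | succ N ih =>
    obtain ⟨s', hs', h'⟩ := ih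
    rcases h'.next hv hpan hcard hd hbal with h'' | h''
    · exact ⟨_, by omega, h''⟩
    · exact ⟨_, by omega, h''⟩

theorem RareMidGap.add_pred (hpan : Pansiot d v) (hcard : Fintype.card α ≤ d) (hd : 3 ≤ d)
    (hbal : Balanced v) {p : ℕ} (hp : 2 ≤ p) (h : RareMidGap hv d p) :
    RareMidGap hv d (p + (d - 1)) := by
  obtain ⟨t, rfl⟩ : ∃ t, p = t + 2 := ⟨p - 2, by omega⟩
  obtain ⟨hmid, hrare⟩ := h
  -- the gaps at `t` and `t + 1` are `d + 1` and `d - 1`, so the letter `v t` is rare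
  have h₁ := nxt_eq_add_pred_of_nxt_succ_eq_add hv hpan hcard (by omega) (s := t + 1) hmid
  have h₀ : nxt hv t = t + d + 1 := by
    have := add_pred_le_nxt hv hpan t
    have := nxt_le_add_add_one hv hpan hcard (by omega) t
    have := nxt_succ_ne_nxt_add_one hv hpan t
    have := nxt_succ_eq_of_nxt_eq_add hv hpan hcard hd (s := t)
    omega
  have hrare₀ := hbal.isRare_of_nxt_eq hv h₀
  rw [← apply_add_of_nxt_eq hv (g := d + 1) (by omega),
    show t + (d + 1) = t + 2 + (d - 1) by omega] at hrare₀
  refine ⟨?_, hrare₀⟩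
  have := add_pred_le_nxt hv hpan (t + 2 + (d - 1))
  have := nxt_le_add_add_one hv hpan hcard (by omega) (t + 2 + (d - 1))
  have := hrare₀.nxt_ne hv
  -- a gap `d + 1` there would give the rare letter `v (t + 2)` a gap `d - 1` at `t + d + 2`
  have hnext := nxt_succ_eq_of_nxt_eq_add_add_one hv hpan hcard (by omega) (s := t + 2 + (d - 1))
  rw [← apply_add_of_nxt_eq hv hmid, show t + 2 + d = t + 2 + (d - 1) + 1 by omega] at hrare
  have := hrare.nxt_ne hv
  omega

theorem RareMidGap.add_mul_pred (hpan : Pansiot d v) (hcard : Fintype.card α ≤ d) (hd : 3 ≤ d)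
    (hbal : Balanced v) {p : ℕ} (hp : 2 ≤ p) (h : RareMidGap hv d p) (j : ℕ) :
    RareMidGap hv d (p + j * (d - 1)) := by
  induction j with
  | zero => simpa using h
  | succ j ih =>
    rw [add_one_mul, ← add_assoc]
    exact ih.add_pred hv hpan hcard hd hbal (by omega)

theorem FrequentMidGap.dist_ge_two (hpan : Pansiot d v) (hcard : Fintype.card α ≤ d)
    (hd : 3 ≤ d) (hbal : Balanced v) {s t : ℕ} (hs : FrequentMidGap hv d s)
    (ht : RareMidGap hv d t) : s + 2 ≤ t ∨ t + 2 ≤ s := by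
  have hne : s ≠ t := by
    rintro rfl
    exact hs.not_isRare hv hpan hcard hd hbal ht.2
  have hs₁ := nxt_succ_eq_of_nxt_eq_add hv hpan hcard hd hs.1
  have ht₁ := nxt_succ_eq_of_nxt_eq_add hv hpan hcard hd ht.1
  rcases (by omega : s + 2 ≤ t ∨ t + 2 ≤ s ∨ t = s + 1 ∨ s = t + 1) with h | h | rfl | rfl
  · exact Or.inl h
  · exact Or.inr h
  · have := ht.1
    omega
  · have := hs.1
    omega

end MidGaps

end NextOccurrence

theorem false_of_steps_avoiding_progression {P : ℕ → Prop} {d p s : ℕ} (hd : 2 ≤ d)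
    (hs : p ≤ s) (hPs : P s) (hstep : ∀ s, P s → P (s + d) ∨ P (s + d + 1))
    (havoid : ∀ s, p ≤ s → P s →
      ∀ j, s + 2 ≤ p + j * (d - 1) ∨ p + j * (d - 1) + 2 ≤ s) :
    False := by
  obtain ⟨m, rfl⟩ : ∃ m, d = m + 1 := ⟨d - 1, by omega⟩
  simp only [Nat.add_sub_cancel] at havoid
  -- the residue `r` of `s - p` modulo `m` stays below `m - 1` and strictly increases along steps
  have hclimb : ∀ n, ∃ s q r, P s ∧ s = p + q * m + r ∧ n ≤ r ∧ r < m := by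
    intro n
    induction n with
    | zero =>
      refine ⟨s, (s - p) / m, (s - p) % m, hPs, ?_, Nat.zero_le _, Nat.mod_lt _ (by omega)⟩
      have := Nat.div_add_mod (s - p) m
      rw [Nat.mul_comm] at this
      omega
    | succ n ih =>
      obtain ⟨s, q, r, hPs, rfl, hnr, hrm⟩ := ih
      have hq₁ := havoid _ (by omega) hPs (q + 1)
      rw [add_one_mul] at hq₁
      rcases hstep _ hPs with hP' | hP'
      · exact ⟨_, q + 1, r + 1, hP', by rw [add_one_mul]; omega, by omega, by omega⟩
      · have hq₂ := havoid _ (by omega) hP' (q + 2)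
        rw [show (q + 2) * m = q * m + m + m by ring] at hq₂
        exact ⟨_, q + 1, r + 2, hP', by rw [add_one_mul]; omega, by omega, by omega⟩
  obtain ⟨_, _, _, _, _, hmr, hrm⟩ := hclimb m
  omega

theorem statement4_general {α : Type*} [Fintype α] [DecidableEq α] (d : ℕ) (hd : 11 ≤ d)
    (hcard : Fintype.card α = d) (v : ℕ → α)
    (hrec : Recurrent v) (hbal : Balanced v)
    (hpan : Pansiot d v) :
    (∀ a : α, (∃ i, v i = a) →
      (∀ i j : ℕ, ConsecOcc v a i j → j - i ≠ d + 1) →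
      ∀ i j : ℕ, ConsecOcc v a i j → j - i = d - 1) ∨
    (∀ a : α, (∃ i, v i = a) →
      (∀ i j : ℕ, ConsecOcc v a i j → j - i ≠ d - 1) →
      ∀ i j : ℕ, ConsecOcc v a i j → j - i = d + 1) := by
  by_contra hcon
  simp only [not_or, not_forall] at hcon
  obtain ⟨⟨a, -, hfreq, i, j, hij, hgap⟩, ⟨b, -, hrare, i', j', hij', hgap'⟩⟩ := hcon
  have hv := hrec.exists_lt_apply_eq
  replace hcard := hcard.le
  have hgap'' := hrare i' j' hij'
  obtain ⟨p, hp, hp'⟩ := hrec.exists_consecOcc_ge hij' 2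
  have hR : RareMidGap hv d p := ⟨nxt_eq_add_of_consecOcc hv hpan hcard (by omega) hp'
    (by omega) (by omega), hp'.2.1 ▸ hrare⟩
  have hL : FrequentMidGap hv d i := ⟨nxt_eq_add_of_consecOcc hv hpan hcard (by omega) hij
    hgap (hfreq i j hij), hij.2.1 ▸ hfreq⟩
  obtain ⟨s, hs, hLs⟩ := hL.exists_ge hv hpan hcard (by omega) hbal p
  exact false_of_steps_avoiding_progression (by omega) hs hLs
    (fun _ h => h.next hv hpan hcard (by omega) hbal)
    (fun _ _ h j => h.dist_ge_two hv hpan hcard (by omega) hbal (hR.add_mul_pred hv hpan hcard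
      (by omega) hbal hp j))

theorem statement4 {α : Type*} [Fintype α] [DecidableEq α] (d : ℕ) (hd : 11 ≤ d)
    (hcard : Fintype.card α = d) (v : ℕ → α)
    (hrec : Recurrent v) (hap : ¬ EventuallyPeriodic v) (hbal : Balanced v)
    (hpan : Pansiot d v) :
    (∀ a : α, (∃ i, v i = a) →
      (∀ i j : ℕ, ConsecOcc v a i j → j - i ≠ d + 1) →
      ∀ i j : ℕ, ConsecOcc v a i j → j - i = d - 1) ∨
    (∀ a : α, (∃ i, v i = a) →
      (∀ i j : ℕ, ConsecOcc v a i j → j - i ≠ d - 1) →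
      ∀ i j : ℕ, ConsecOcc v a i j → j - i = d + 1) :=
  statement4_general d hd hcard v hrec hbal hpan

end BalancedCE
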